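/- Let Δ = (1/4)(x + x^{-1} + y + y^{-1}) be the Laplace operator acting on ℓ^2 of the discrete Heisenberg group H, let E be its spectral measure, and let μ(A) = (E(A)δ_e, δ_e) be the spectral measure at δ_e. Then for every α > 0 there is a constant c_1 > 0 such that for all sufficiently small t > 0, μ([-1, -1+t] ∪ [1-t, 1]) ≥ c_1 t^{2+α}. -/

import Mathlib

/-!
The moments of `μ` are return probabilities of the simple random walk on `H`:
`∫ x ^ k ∂μ = p_k(e)`. By the second moments of the coordinates, after `n` steps the walk lies
with probability `≥ 1/2` in a box `|a|, |b| ≲ √n`, `|c| ≲ n` of `≍ n²` elements, so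
Cauchy–Schwarz and the symmetry of the steps give `p_{2n}(e) = ∑_g p_n(g)² ≳ n⁻²`.
On the other hand `μ` lives on `[-1, 1]`, so `∫ x ^ (2n) ∂μ ≤ (1 - t) ^ (2n) + μ(E_t)` with
`E_t = [-1, -1 + t] ∪ [1 - t, 1]`. Taking `n ≈ 2 log(1/t) / t` makes `(1 - t) ^ (2n) ≤ t⁴`
negligible and leaves `μ(E_t) ≳ t² / log²(1/t) ≥ t ^ (2 + α)`.
-/

@[ext]
structure Heis (R : Type*) [CommRing R] where
  a : R
  b : R
  c : R
  deriving DecidableEq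

namespace Heis
variable {R : Type*} [CommRing R]

instance : One (Heis R) := ⟨⟨0, 0, 0⟩⟩
instance : Mul (Heis R) := ⟨fun p q => ⟨p.a + q.a, p.b + q.b, p.c + q.c + p.a * q.b⟩⟩
instance : Inv (Heis R) := ⟨fun p => ⟨-p.a, -p.b, -p.c + p.a * p.b⟩⟩

theorem mul_def (p q : Heis R) :
    p * q = ⟨p.a + q.a, p.b + q.b, p.c + q.c + p.a * q.b⟩ := rfl
theorem one_def : (1 : Heis R) = ⟨0, 0, 0⟩ := rfl
theorem inv_def (p : Heis R) : p⁻¹ = ⟨-p.a, -p.b, -p.c + p.a * p.b⟩ := rfl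

instance : Group (Heis R) where
  mul_assoc p q r := by ext <;> simp [mul_def] <;> ring
  one_mul p := by ext <;> simp [mul_def, one_def]
  mul_one p := by ext <;> simp [mul_def, one_def]
  inv_mul_cancel p := by ext <;> simp [mul_def, one_def, inv_def]

/-- generator x -/
def xgen : Heis R := ⟨1, 0, 0⟩
/-- generator y -/
def ygen : Heis R := ⟨0, 1, 0⟩

end Heis

section RandomWalk

open Finset

section WalkCount

variable {G ι : Type*} [Group G] (S : ι → G)

def wordProd {n : ℕ} (w : Fin n → ι) : G := (List.ofFn fun k => S (w k)).prod

lemma wordProd_cons {n : ℕ} (i : ι) (w : Fin n → ι) :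
    wordProd S (Fin.cons i w : Fin (n + 1) → ι) = S i * wordProd S w := by
  simp [wordProd, List.ofFn_succ]

lemma wordProd_append {m n : ℕ} (u : Fin m → ι) (v : Fin n → ι) :
    wordProd S (Fin.append u v) = wordProd S u * wordProd S v := by
  simp [wordProd, List.ofFn_add]

lemma wordProd_comp_rev {n : ℕ} {σ : ι → ι} (hσ : ∀ i, S (σ i) = (S i)⁻¹)
    (w : Fin n → ι) :
    wordProd S (σ ∘ w ∘ Fin.rev) = (wordProd S w)⁻¹ := by
  rw [wordProd, wordProd, List.prod_inv_reverse]
  congr 1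
  refine List.ext_getElem (by simp) fun k h₁ h₂ => ?_
  simp [hσ, Fin.rev]
  congr 3
  omega

lemma sum_wordProd_succ [Fintype ι] {M : Type*} [AddCommMonoid M] (F : G → M) (n : ℕ) :
    ∑ w : Fin (n + 1) → ι, F (wordProd S w)
      = ∑ w : Fin n → ι, ∑ i, F (S i * wordProd S w) := by
  rw [← (Fin.consEquiv fun _ => ι).sum_comp, Fintype.sum_prod_type, sum_comm]
  simp [Fin.consEquiv, wordProd_cons]

variable [Fintype ι] [DecidableEq G]

def walkCount (n : ℕ) (g : G) : ℕ := #{w : Fin n → ι | wordProd S w = g}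

lemma walkCount_zero (g : G) : walkCount S 0 g = if g = 1 then 1 else 0 := by
  split_ifs with h <;> simp [walkCount, wordProd, h, eq_comm]

lemma walkCount_succ (n : ℕ) (g : G) :
    walkCount S (n + 1) g = ∑ i, walkCount S n ((S i)⁻¹ * g) := by
  simp only [walkCount, card_filter, sum_wordProd_succ S fun h => if h = g then 1 else 0]
  rw [sum_comm]
  simp [eq_inv_mul_iff_mul_eq]

lemma walkCount_add (m n : ℕ) (g : G) :
    walkCount S (m + n) g = ∑ u : Fin m → ι, walkCount S n ((wordProd S u)⁻¹ * g) := by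
  simp only [walkCount, card_eq_sum_ones, sum_filter]
  rw [← (Fin.appendEquiv m n).sum_comp, Fintype.sum_prod_type]
  simp [Fin.appendEquiv, wordProd_append, eq_inv_mul_iff_mul_eq]

lemma walkCount_inv {σ : Equiv.Perm ι} (hσ : ∀ i, S (σ i) = (S i)⁻¹) (n : ℕ) (g : G) :
    walkCount S n g⁻¹ = walkCount S n g := by
  refine card_equiv (Equiv.arrowCongr Fin.revPerm σ) fun w => ?_
  simp only [mem_filter, mem_univ, true_and]
  change _ ↔ wordProd S (σ ∘ w ∘ Fin.rev) = g
  rw [wordProd_comp_rev S hσ, inv_eq_iff_eq_inv]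

lemma sq_card_wordProd_mem_le {σ : Equiv.Perm ι} (hσ : ∀ i, S (σ i) = (S i)⁻¹) (n : ℕ)
    (B : Finset G) :
    #{w : Fin n → ι | wordProd S w ∈ B} ^ 2 ≤ #B * walkCount S (n + n) 1 := by
  have h_sum_sq : ∑ g ∈ B, walkCount S n g ^ 2 ≤ walkCount S (n + n) 1 :=
    calc ∑ g ∈ B, walkCount S n g ^ 2
        = ∑ g ∈ B, ∑ w : Fin n → ι with wordProd S w = g, walkCount S n g := by
          simp [walkCount, sq]
      _ = ∑ w : Fin n → ι with wordProd S w ∈ B, walkCount S n (wordProd S w) :=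
          sum_fiberwise_eq_sum_filter' _ _ _ _
      _ ≤ ∑ w : Fin n → ι, walkCount S n (wordProd S w) :=
          sum_le_sum_of_subset (subset_univ _)
      _ = walkCount S (n + n) 1 := by simp [walkCount_add, walkCount_inv S hσ]
  calc #{w : Fin n → ι | wordProd S w ∈ B} ^ 2 = (∑ g ∈ B, walkCount S n g) ^ 2 := by
        simp only [walkCount, sum_card_fiberwise_eq_card_filter]
    _ ≤ #B * ∑ g ∈ B, walkCount S n g ^ 2 := sq_sum_le_card_mul_sum_sq
    _ ≤ #B * walkCount S (n + n) 1 := Nat.mul_le_mul_left _ h_sum_sq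

end WalkCount

section WalkOperator

variable {G ι : Type*} [Group G] [DecidableEq G] [Fintype ι]

def IsRandomWalkOperator (S : ι → G)
    (T : lp (fun _ : G => ℂ) 2 →L[ℂ] lp (fun _ : G => ℂ) 2) : Prop :=
  ∀ f g, (T f : G → ℂ) g = (Fintype.card ι : ℂ)⁻¹ * ∑ i, (f : G → ℂ) (g * S i)

variable {S : ι → G} {T : lp (fun _ : G => ℂ) 2 →L[ℂ] lp (fun _ : G => ℂ) 2}

lemma pow_apply_single_one (hT : IsRandomWalkOperator S T) (k : ℕ) (g : G) :
    ((T ^ k) (lp.single 2 1 1) : G → ℂ) g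
      = (Fintype.card ι : ℂ)⁻¹ ^ k * walkCount S k g⁻¹ := by
  induction k generalizing g with
  | zero => by_cases hg : g = 1 <;> simp [walkCount_zero, lp.single_apply, hg]
  | succ k ih =>
    rw [pow_succ', mul_apply_eq_comp, hT, walkCount_succ]
    simp only [ih, mul_inv_rev, Nat.cast_sum, Finset.mul_sum, pow_succ]
    exact sum_congr rfl fun i _ => by ring

lemma re_inner_pow_single_one (hT : IsRandomWalkOperator S T) (k : ℕ) :
    (inner ℂ ((T ^ k) (lp.single 2 1 1)) (lp.single 2 (1 : G) (1 : ℂ))).re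
      = walkCount S k 1 / (Fintype.card ι : ℝ) ^ k := by
  rw [lp.inner_single_right, pow_apply_single_one hT, inv_one, RCLike.inner_apply, one_mul,
    Complex.conj_re, div_eq_inv_mul, ← inv_pow,
    ← Complex.ofReal_re ((Fintype.card ι : ℝ)⁻¹ ^ k * walkCount S k 1)]
  push_cast
  rfl

end WalkOperator

namespace Heis

def steps : Fin 4 → Heis ℤ := ![xgen, xgen⁻¹, ygen, ygen⁻¹]

lemma steps_swap_eq_inv (i : Fin 4) :
    steps ((Equiv.swap 0 1 * Equiv.swap 2 3 : Equiv.Perm (Fin 4)) i) = (steps i)⁻¹ := by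
  fin_cases i <;> rfl

lemma sum_steps_mul_a_sq (p : Heis ℤ) : ∑ i, (steps i * p).a ^ 2 = 4 * p.a ^ 2 + 2 := by
  simp [Fin.sum_univ_four, steps, mul_def, inv_def, xgen, ygen]
  ring

lemma sum_steps_mul_b_sq (p : Heis ℤ) : ∑ i, (steps i * p).b ^ 2 = 4 * p.b ^ 2 + 2 := by
  simp [Fin.sum_univ_four, steps, mul_def, inv_def, xgen, ygen]
  ring

lemma sum_steps_mul_c_sq (p : Heis ℤ) :
    ∑ i, (steps i * p).c ^ 2 = 4 * p.c ^ 2 + 2 * p.b ^ 2 := by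
  simp [Fin.sum_univ_four, steps, mul_def, inv_def, xgen, ygen]
  ring

lemma sum_wordProd_a_sq (n : ℕ) :
    2 * ∑ w : Fin n → Fin 4, (wordProd steps w).a ^ 2 = n * 4 ^ n := by
  induction n with
  | zero => simp [wordProd, one_def]
  | succ n ih =>
    rw [sum_wordProd_succ steps fun g => g.a ^ 2]
    simp only [sum_steps_mul_a_sq, sum_add_distrib, ← mul_sum, sum_const,
      card_univ, Fintype.card_fun, Fintype.card_fin, nsmul_eq_mul]
    push_cast
    linear_combination 4 * ih

lemma sum_wordProd_b_sq (n : ℕ) :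
    2 * ∑ w : Fin n → Fin 4, (wordProd steps w).b ^ 2 = n * 4 ^ n := by
  induction n with
  | zero => simp [wordProd, one_def]
  | succ n ih =>
    rw [sum_wordProd_succ steps fun g => g.b ^ 2]
    simp only [sum_steps_mul_b_sq, sum_add_distrib, ← mul_sum, sum_const,
      card_univ, Fintype.card_fun, Fintype.card_fin, nsmul_eq_mul]
    push_cast
    linear_combination 4 * ih

lemma sum_wordProd_c_sq (n : ℕ) :
    8 * ∑ w : Fin n → Fin 4, (wordProd steps w).c ^ 2 = n * (n - 1) * 4 ^ n := by
  induction n with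
  | zero => simp [wordProd, one_def]
  | succ n ih =>
    rw [sum_wordProd_succ steps fun g => g.c ^ 2]
    simp only [sum_steps_mul_c_sq, sum_add_distrib, ← mul_sum]
    push_cast
    linear_combination 4 * ih + 8 * sum_wordProd_b_sq n

noncomputable def box (K M : ℕ) : Finset (Heis ℤ) :=
  (Icc (-K : ℤ) K ×ˢ Icc (-K : ℤ) K ×ˢ Icc (-M : ℤ) M).image
    fun p => ⟨p.1, p.2.1, p.2.2⟩

lemma mem_box_of_abs_le {K M : ℕ} {g : Heis ℤ} (ha : |g.a| ≤ K) (hb : |g.b| ≤ K)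
    (hc : |g.c| ≤ M) : g ∈ box K M := by
  rw [abs_le] at ha hb hc
  exact mem_image.mpr ⟨(g.a, g.b, g.c), by simp [ha, hb, hc], rfl⟩

lemma card_box_le (K M : ℕ) : #(box K M) ≤ (2 * K + 1) ^ 2 * (2 * M + 1) := by
  refine card_image_le.trans_eq ?_
  have h_card : ∀ N : ℕ, ((N : ℤ) + 1 - -N).toNat = 2 * N + 1 := fun N => by omega
  simp only [card_product, Int.card_Icc, h_card]
  ring

lemma mem_box_of_le {n : ℕ} {g : Heis ℤ} (hn : 0 < n)
    (hg : n * (g.a ^ 2 + g.b ^ 2) + g.c ^ 2 ≤ 3 * n ^ 2) :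
    g ∈ box (Nat.sqrt (3 * n)) (2 * n) := by
  have hn' : (0 : ℤ) < n := by exact_mod_cast hn
  have hab : g.a ^ 2 + g.b ^ 2 < (Nat.sqrt (3 * n) + 1 : ℕ) ^ 2 := by
    have : (3 * n : ℤ) < (Nat.sqrt (3 * n) + 1 : ℕ) ^ 2 := by
      exact_mod_cast Nat.lt_succ_sqrt' _
    nlinarith [sq_nonneg g.c]
  have h_abs : ∀ x : ℤ, x ^ 2 < (Nat.sqrt (3 * n) + 1 : ℕ) ^ 2 → |x| ≤ Nat.sqrt (3 * n) :=
    fun x hx => Int.lt_add_one_iff.mp (by exact_mod_cast abs_lt_of_sq_lt_sq hx (by positivity))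
  refine mem_box_of_abs_le (h_abs _ ?_) (h_abs _ ?_) (abs_le_of_sq_le_sq ?_ (by positivity))
  · nlinarith [sq_nonneg g.b]
  · nlinarith [sq_nonneg g.a]
  · push_cast
    nlinarith [sq_nonneg g.a, sq_nonneg g.b]

lemma sum_wordProd_weighted_sq (n : ℕ) :
    8 * ∑ w : Fin n → Fin 4,
        (n * ((wordProd steps w).a ^ 2 + (wordProd steps w).b ^ 2) + (wordProd steps w).c ^ 2)
      = (9 * n ^ 2 - n) * 4 ^ n := by
  simp only [sum_add_distrib, ← mul_sum]
  linear_combination (4 * n : ℤ) * sum_wordProd_a_sq n + (4 * n : ℤ) * sum_wordProd_b_sq n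
    + sum_wordProd_c_sq n

lemma card_wordProd_mem_box {n : ℕ} (hn : 0 < n) :
    4 ^ n ≤ 2 * #{w : Fin n → Fin 4 | wordProd steps w ∈ box (Nat.sqrt (3 * n)) (2 * n)} := by
  set V : Heis ℤ → ℤ := fun g => n * (g.a ^ 2 + g.b ^ 2) + g.c ^ 2
  set bad : Finset (Fin n → Fin 4) := {w | 3 * n ^ 2 < V (wordProd steps w)}
  -- Markov's inequality for `V`, whose mean is at most `9 n ^ 2 / 8`
  have h_markov : #bad * (3 * n ^ 2 : ℤ) ≤ ∑ w : Fin n → Fin 4, V (wordProd steps w) := by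
    rw [← nsmul_eq_mul]
    exact (card_nsmul_le_sum _ _ _ fun w hw => (mem_filter.mp hw).2.le).trans
      (sum_le_sum_of_subset_of_nonneg (subset_univ _) fun w _ _ => by positivity)
  have h_bad : 8 * #bad ≤ 3 * 4 ^ n := by
    have h_sum := sum_wordProd_weighted_sq n
    have : (0 : ℤ) < n := by exact_mod_cast hn
    have : (8 * #bad : ℤ) ≤ 3 * 4 ^ n := by nlinarith [pow_pos (by norm_num : (0 : ℤ) < 4) n]
    exact_mod_cast this
  have h_split : #bad + #({w | ¬ 3 * n ^ 2 < V (wordProd steps w)} : Finset (Fin n → Fin 4))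
      = 4 ^ n := by
    rw [card_filter_add_card_filter_not, card_univ, Fintype.card_fun, Fintype.card_fin,
      Fintype.card_fin]
  have h_good : #({w | ¬ 3 * n ^ 2 < V (wordProd steps w)} : Finset (Fin n → Fin 4))
      ≤ #{w : Fin n → Fin 4 | wordProd steps w ∈ box (Nat.sqrt (3 * n)) (2 * n)} :=
    card_le_card (monotone_filter_right _ fun w _ hw => mem_box_of_le hn (not_lt.mp hw))
  omega

lemma four_pow_le_walkCount {n : ℕ} (hn : 0 < n) :
    4 ^ (2 * n) ≤ 540 * n ^ 2 * walkCount steps (2 * n) 1 := by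
  set K := Nat.sqrt (3 * n)
  have hK : 1 ≤ K := Nat.sqrt_pos.mpr (by omega)
  have h_box : #(box K (2 * n)) ≤ 135 * n ^ 2 :=
    calc #(box K (2 * n)) ≤ (2 * K + 1) ^ 2 * (2 * (2 * n) + 1) := card_box_le _ _
      _ ≤ (27 * n) * (5 * n) := by
        gcongr
        · nlinarith [Nat.sqrt_le' (3 * n)]
        · omega
      _ = 135 * n ^ 2 := by ring
  rw [two_mul n]
  calc 4 ^ (n + n) = (4 ^ n) ^ 2 := by rw [← two_mul, pow_mul']
    _ ≤ (2 * #{w : Fin n → Fin 4 | wordProd steps w ∈ box K (2 * n)}) ^ 2 :=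
        Nat.pow_le_pow_left (card_wordProd_mem_box hn) 2
    _ = 4 * #{w : Fin n → Fin 4 | wordProd steps w ∈ box K (2 * n)} ^ 2 := by ring
    _ ≤ 4 * (#(box K (2 * n)) * walkCount steps (n + n) 1) :=
        Nat.mul_le_mul_left 4 (sq_card_wordProd_mem_le steps steps_swap_eq_inv n _)
    _ ≤ 4 * (135 * n ^ 2 * walkCount steps (n + n) 1) := by gcongr
    _ = 540 * n ^ 2 * walkCount steps (n + n) 1 := by ring

end Heis

end RandomWalk

section SpectralMeasure

open Real Filter Topology MeasureTheory Set

lemma pow_two_mul_le_add_indicator {x : ℝ} (hx : x ∈ Icc (-1 : ℝ) 1) (t : ℝ) (n : ℕ) :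
    x ^ (2 * n)
      ≤ (1 - t) ^ (2 * n) + (Icc (-1) (-1 + t) ∪ Icc (1 - t) 1).indicator (fun _ => 1) x := by
  have h_even : Even (2 * n) := even_two_mul n
  rw [← h_even.pow_abs]
  rcases le_or_gt |x| (1 - t) with h | h
  · have := pow_le_pow_left₀ (abs_nonneg x) h (2 * n)
    have := indicator_nonneg (fun _ _ => zero_le_one) x
      (s := Icc (-1 : ℝ) (-1 + t) ∪ Icc (1 - t) 1) (f := fun _ => (1 : ℝ))
    linarith
  · have h_mem : x ∈ Icc (-1 : ℝ) (-1 + t) ∪ Icc (1 - t) 1 := by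
      rcases lt_abs.mp h with h | h
      · exact Or.inr ⟨h.le, hx.2⟩
      · exact Or.inl ⟨hx.1, by linarith⟩
    rw [indicator_of_mem h_mem]
    have := pow_le_one₀ (abs_nonneg x) (abs_le.mpr hx) (n := 2 * n)
    linarith [h_even.pow_nonneg (1 - t)]

lemma integral_pow_two_mul_le {μ : Measure ℝ} [IsProbabilityMeasure μ]
    (hμ : μ (Icc (-1 : ℝ) 1)ᶜ = 0) (t : ℝ) (n : ℕ) :
    ∫ x, x ^ (2 * n) ∂μ
      ≤ (1 - t) ^ (2 * n) + μ.real (Icc (-1) (-1 + t) ∪ Icc (1 - t) 1) := by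
  have h_meas : MeasurableSet (Icc (-1 : ℝ) (-1 + t) ∪ Icc (1 - t) 1) :=
    measurableSet_Icc.union measurableSet_Icc
  have h_int := (integrable_const (1 : ℝ)).indicator h_meas (μ := μ)
  calc ∫ x, x ^ (2 * n) ∂μ
      ≤ ∫ x, (1 - t) ^ (2 * n)
          + (Icc (-1) (-1 + t) ∪ Icc (1 - t) 1).indicator (fun _ => 1) x ∂μ := by
        refine integral_mono_of_nonneg (ae_of_all _ fun x => (even_two_mul n).pow_nonneg x)
          ((integrable_const _).add h_int) ?_
        filter_upwards [measure_eq_zero_iff_ae_notMem.mp hμ] with x hx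
        exact pow_two_mul_le_add_indicator (not_not.mp hx) t n
    _ = _ := by
        rw [integral_add (integrable_const _) h_int, integral_const]
        simp [integral_indicator_const _ h_meas]

lemma eventually_log_sq_mul_rpow_le {β ε : ℝ} (hβ : 0 < β) (hε : 0 < ε) :
    ∀ᶠ t in 𝓝[>] 0, log t ^ 2 * t ^ β ≤ ε := by
  have h_lim := ((tendsto_log_mul_rpow_nhdsGT_zero (half_pos hβ)).pow 2).eventually_le_const
    (by simpa using hε)
  filter_upwards [h_lim, self_mem_nhdsWithin] with t ht (ht₀ : 0 < t)
  have h_sq : (t ^ (β / 2)) ^ 2 = t ^ β := by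
    rw [← rpow_natCast, ← rpow_mul ht₀.le]
    norm_num
  rwa [mul_pow, h_sq] at ht

lemma one_sub_pow_two_mul_le_pow_four {t : ℝ} {n : ℕ} (ht : 0 < t) (ht₁ : t ≤ 1)
    (hn : -2 * log t ≤ t * n) : (1 - t) ^ (2 * n) ≤ t ^ 4 :=
  calc (1 - t) ^ (2 * n) ≤ exp (-t) ^ (2 * n) :=
        pow_le_pow_left₀ (by linarith) (one_sub_le_exp_neg t) _
    _ = exp (-(2 * (t * n))) := by rw [← exp_nat_mul]; push_cast; ring_nf
    _ ≤ exp (4 * log t) := exp_le_exp.mpr (by linarith)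
    _ = t ^ 4 := by rw [show (4 : ℝ) = (4 : ℕ) by norm_num, exp_nat_mul, exp_log ht]

lemma exists_pos_eventually_rpow_le_inv_sq_sub {C α : ℝ} (hC : 0 < C) (hα : 0 < α) :
    ∃ c > 0, ∀ᶠ t in 𝓝[>] 0, ∃ n : ℕ, 0 < n ∧
      c * t ^ (2 + α) ≤ 1 / (C * n ^ 2) - (1 - t) ^ (2 * n) := by
  refine ⟨1 / (18 * C), by positivity, ?_⟩
  filter_upwards [self_mem_nhdsWithin, tendsto_log_nhdsGT_zero.eventually_le_atBot (-1),
    eventually_log_sq_mul_rpow_le two_pos (by positivity : 0 < 1 / (18 * C)),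
    eventually_log_sq_mul_rpow_le hα one_pos] with t (ht : 0 < t) h_log h_two h_α
  rw [rpow_two] at h_two
  set L := -log t
  have hL : 1 ≤ L := by linarith
  have hL_sq : log t ^ 2 = L ^ 2 := (neg_sq _).symm
  have ht₁ : t ≤ 1 := by
    have := exp_log ht
    nlinarith [exp_le_one_iff.mpr (by linarith : log t ≤ 0)]
  -- `n ≈ 2 L / t` makes `(1 - t) ^ (2 n) ≤ t ^ 4` negligible, yet `1 / n ^ 2 ≈ t² / L²`
  set n := ⌈2 * L / t⌉₊
  have hn : 0 < n := Nat.ceil_pos.mpr (by positivity)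
  refine ⟨n, hn, ?_⟩
  have h_lo : 2 * L ≤ t * n := (div_le_iff₀' ht).mp (Nat.le_ceil _)
  have h_hi : t * n ≤ 3 * L := by
    have := Nat.ceil_lt_add_one (by positivity : 0 ≤ 2 * L / t)
    rw [div_add_one ht.ne', lt_div_iff₀' ht] at this
    linarith
  have h_pow := one_sub_pow_two_mul_le_pow_four ht ht₁ (by linarith)
  have hn' : (0 : ℝ) < n := Nat.cast_pos.mpr hn
  have h_inv : t ^ 2 / (9 * C * L ^ 2) ≤ 1 / (C * n ^ 2) := by
    rw [div_le_div_iff₀ (by positivity) (by positivity)]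
    nlinarith [mul_self_le_mul_self (by positivity) h_hi]
  have h_t4 : t ^ 4 ≤ t ^ 2 / (18 * C * L ^ 2) := by
    rw [le_div_iff₀ (by positivity)]
    rw [hL_sq, le_div_iff₀ (by positivity)] at h_two
    nlinarith [sq_nonneg t]
  have h_main : 1 / (18 * C) * t ^ (2 + α) ≤ t ^ 2 / (18 * C * L ^ 2) := by
    rw [rpow_add ht, rpow_two, div_mul_eq_mul_div,
      div_le_div_iff₀ (by positivity) (by positivity)]
    rw [hL_sq] at h_α
    nlinarith [mul_le_mul_of_nonneg_left h_α (by positivity : 0 ≤ 18 * C * t ^ 2)]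
  have : t ^ 2 / (18 * C * L ^ 2) = t ^ 2 / (9 * C * L ^ 2) - t ^ 2 / (18 * C * L ^ 2) := by
    field_simp; ring
  linarith

end SpectralMeasure

open MeasureTheory

/-- main theorem: let Δ be the Laplace operator
(1/4)(x + x⁻¹ + y + y⁻¹) acting on ℓ²(H) of the discrete Heisenberg group H, δₑ the
indicator of the identity, and μ the spectral measure of Δ at δₑ (characterized as
the measure on ℝ supported in [-1,1] whose k-th moment is ⟨Δ^k δₑ, δₑ⟩ for every k).
Then for every α > 0 there is c₁ > 0 such that for all sufficiently small t > 0,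
μ([-1,-1+t] ∪ [1-t,1]) ≥ c₁ t^{2+α}. -/
theorem heisenberg_spectral_measure_near_one (α : ℝ) (hα : 0 < α) :
    ∃ c₁ : ℝ, 0 < c₁ ∧ ∃ t₀ : ℝ, 0 < t₀ ∧
      ∀ (T : lp (fun _ : Heis ℤ => ℂ) 2 →L[ℂ] lp (fun _ : Heis ℤ => ℂ) 2),
        (∀ (f : lp (fun _ : Heis ℤ => ℂ) 2) (g : Heis ℤ),
          (T f : ∀ _ : Heis ℤ, ℂ) g
            = (1 / 4 : ℂ) * ((f : ∀ _ : Heis ℤ, ℂ) (g * Heis.xgen)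
              + (f : ∀ _ : Heis ℤ, ℂ) (g * Heis.xgen⁻¹)
              + (f : ∀ _ : Heis ℤ, ℂ) (g * Heis.ygen)
              + (f : ∀ _ : Heis ℤ, ℂ) (g * Heis.ygen⁻¹))) →
        ∀ μ : Measure ℝ,
          μ (Set.Icc (-1 : ℝ) 1)ᶜ = 0 →
          (∀ k : ℕ, (∫ x : ℝ, x ^ k ∂μ)
              = (inner ℂ ((T ^ k) (lp.single 2 (1 : Heis ℤ) (1 : ℂ)))
                  (lp.single 2 (1 : Heis ℤ) (1 : ℂ)) : ℂ).re) →
          ∀ t : ℝ, 0 < t → t < t₀ →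
            c₁ * t ^ (2 + α)
              ≤ (μ (Set.Icc (-1 : ℝ) (-1 + t) ∪ Set.Icc (1 - t) 1)).toReal := by
  obtain ⟨c, hc, h_ev⟩ := exists_pos_eventually_rpow_le_inv_sq_sub (C := 540) (by norm_num) hα
  obtain ⟨t₀, ht₀, h_sub⟩ := mem_nhdsGT_iff_exists_Ioo_subset.mp h_ev
  refine ⟨c, hc, t₀, ht₀, fun T hT μ hμ h_mom t ht htt₀ => ?_⟩
  have h_walk : IsRandomWalkOperator Heis.steps T := fun f g => by
    rw [hT]
    simp [Fin.sum_univ_four, Heis.steps]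
  have h_moment (k : ℕ) : ∫ x, x ^ k ∂μ = walkCount Heis.steps k 1 / 4 ^ k := by
    rw [h_mom, re_inner_pow_single_one h_walk, Fintype.card_fin, Nat.cast_ofNat]
  have : IsProbabilityMeasure μ :=
    isProbabilityMeasure_iff_real.mpr (by simpa [walkCount_zero] using h_moment 0)
  obtain ⟨n, hn, h_n⟩ := h_sub ⟨ht, htt₀⟩
  have h_return : 1 / (540 * n ^ 2) ≤ ∫ x, x ^ (2 * n) ∂μ := by
    rw [h_moment, div_le_div_iff₀ (by positivity) (by positivity), one_mul]
    exact_mod_cast (Heis.four_pow_le_walkCount hn).trans_eq (mul_comm _ _)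
  rw [← measureReal_def]
  linarith [integral_pow_two_mul_le hμ t n]
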